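/- arXiv:1706.07862 — 4 statements merged into one kernel-verified Lean document; each statement's English description precedes it below -/
import Mathlib

section
/- For any integers k ≥ 0 and N ≥ 1, the function f : ℝ^N → ℝ defined by f(x) = x₁^(3+k)/(x₁² + ... + x_N²) for x ≠ 0 and f(0) = 0 is of class C^k on ℝ^N. -/
/-!
For a multi-index `α` and `p : ℕ`, let `Q α p x = x^α / (∑ xᵢ²)^p`, extended by `0` at the origin.
It is bounded by `‖x‖^(|α| - 2p)`, so it is continuous when `|α| ≥ 2p + 1` and has derivative
`0` at the origin when `|α| ≥ 2p + 2`. Away from the origin,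
`∂ⱼ Q α p = αⱼ Q (α - eⱼ) p - 2p Q (α + eⱼ) (p + 1)`, and both terms again have homogeneity degree
`|α| - 2p - 1`. By induction on `k`, `Q α p` is `C^k` as soon as `|α| ≥ 2p + k + 1`; the theorem
is the case `α = (3 + k) e₁`, `p = 1`.
-/

open Finset Asymptotics Topology

noncomputable section

variable {ι : Type*} [Fintype ι]

def sumSq (x : ι → ℝ) : ℝ := ∑ i, x i ^ 2

def monomialFun (α : ι → ℕ) (x : ι → ℝ) : ℝ := ∏ i, x i ^ α i

def monomialQuot (α : ι → ℕ) (p : ℕ) (x : ι → ℝ) : ℝ :=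
  if x = 0 then 0 else monomialFun α x / sumSq x ^ p

@[simp]
lemma monomialQuot_zero (α : ι → ℕ) (p : ℕ) : monomialQuot α p 0 = 0 := if_pos rfl

lemma norm_sq_le_sumSq (x : ι → ℝ) : ‖x‖ ^ 2 ≤ sumSq x := by
  have hS : 0 ≤ sumSq x := sum_nonneg fun i _ => sq_nonneg (x i)
  have : ‖x‖ ≤ √(sumSq x) := (pi_norm_le_iff_of_nonneg (Real.sqrt_nonneg _)).2 fun i =>
    Real.abs_le_sqrt (single_le_sum (fun i _ => sq_nonneg (x i)) (mem_univ i))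
  calc ‖x‖ ^ 2 ≤ √(sumSq x) ^ 2 := by gcongr
    _ = sumSq x := Real.sq_sqrt hS

lemma sumSq_pos {x : ι → ℝ} (hx : x ≠ 0) : 0 < sumSq x :=
  (pow_pos (norm_pos_iff.2 hx) 2).trans_le (norm_sq_le_sumSq x)

lemma abs_monomialFun_le (α : ι → ℕ) (x : ι → ℝ) : |monomialFun α x| ≤ ‖x‖ ^ ∑ i, α i := by
  rw [monomialFun, abs_prod, ← prod_pow_eq_pow_sum]
  gcongr with i
  rw [abs_pow]
  gcongr
  exact norm_le_pi_norm x i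

lemma abs_monomialQuot_le {α : ι → ℕ} {p : ℕ} (h : 2 * p ≤ ∑ i, α i) (x : ι → ℝ) :
    |monomialQuot α p x| ≤ ‖x‖ ^ (∑ i, α i - 2 * p) := by
  rcases eq_or_ne x 0 with rfl | hx
  · simp [monomialQuot]
  rw [monomialQuot, if_neg hx, abs_div, abs_pow, abs_of_pos (sumSq_pos hx),
    div_le_iff₀ (pow_pos (sumSq_pos hx) p)]
  calc |monomialFun α x| ≤ ‖x‖ ^ (∑ i, α i - 2 * p) * ‖x‖ ^ (2 * p) := by
        rw [← pow_add, Nat.sub_add_cancel h]; exact abs_monomialFun_le α x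
    _ ≤ ‖x‖ ^ (∑ i, α i - 2 * p) * sumSq x ^ p := by
        rw [pow_mul]; gcongr; exact norm_sq_le_sumSq x

lemma monomialQuot_isBigO {α : ι → ℕ} {p : ℕ} (h : 2 * p ≤ ∑ i, α i) :
    monomialQuot α p =O[𝓝 0] fun x => ‖x - 0‖ ^ (∑ i, α i - 2 * p) :=
  .of_bound' <| .of_forall fun x => by simpa using abs_monomialQuot_le h x

lemma continuous_monomialQuot {α : ι → ℕ} {p : ℕ} (h : 2 * p + 1 ≤ ∑ i, α i) :
    Continuous (monomialQuot α p) := by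
  rw [continuous_iff_continuousAt]
  intro x
  rcases eq_or_ne x 0 with rfl | hx
  · have hm : 0 < ∑ i, α i - 2 * p := by omega
    rw [ContinuousAt, monomialQuot_zero]
    exact (monomialQuot_isBigO (by omega)).trans_tendsto
      (((continuous_norm.comp (continuous_sub_right 0)).pow _).tendsto' 0 0 (by simp [hm.ne']))
  · have hcont : ContinuousAt (fun y => monomialFun α y / sumSq y ^ p) x := by
      unfold monomialFun sumSq
      fun_prop (disch := exact pow_ne_zero _ (sumSq_pos hx).ne')
    exact hcont.congr <| (eventually_ne_nhds hx).mono fun y hy => (if_neg hy).symm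

lemma hasFDerivAt_sumSq (x : ι → ℝ) :
    HasFDerivAt sumSq (∑ j, (2 * x j) • (ContinuousLinearMap.proj j : (ι → ℝ) →L[ℝ] ℝ)) x := by
  refine (HasFDerivAt.fun_sum fun j _ => (hasFDerivAt_apply (𝕜 := ℝ) j x).pow 2).congr_fderiv ?_
  simp

variable [DecidableEq ι]

lemma monomialFun_add_single (α : ι → ℕ) (j : ι) (x : ι → ℝ) :
    monomialFun (α + Pi.single j 1) x = x j * monomialFun α x := by
  rw [monomialFun, monomialFun, ← mul_prod_erase univ _ (mem_univ j),
    ← mul_prod_erase univ (fun i => x i ^ α i) (mem_univ j), ← mul_assoc, ← pow_succ']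
  congr 1
  · simp
  · refine prod_congr rfl fun i hi => ?_
    simp [ne_of_mem_erase hi]

lemma monomialFun_sub_single (α : ι → ℕ) (j : ι) (x : ι → ℝ) :
    monomialFun (α - Pi.single j 1) x = x j ^ (α j - 1) * ∏ i ∈ univ.erase j, x i ^ α i := by
  rw [monomialFun, ← mul_prod_erase univ _ (mem_univ j)]
  congr 1
  · simp
  · refine prod_congr rfl fun i hi => ?_
    simp [ne_of_mem_erase hi]

lemma hasFDerivAt_monomialFun (α : ι → ℕ) (x : ι → ℝ) :
    HasFDerivAt (monomialFun α)
      (∑ j, (α j * monomialFun (α - Pi.single j 1) x) •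
        (ContinuousLinearMap.proj j : (ι → ℝ) →L[ℝ] ℝ)) x := by
  refine (HasFDerivAt.finsetProd fun j _ =>
    (hasFDerivAt_apply (𝕜 := ℝ) j x).pow (α j)).congr_fderiv ?_
  refine sum_congr rfl fun j _ => ?_
  rw [smul_smul, monomialFun_sub_single, nsmul_eq_mul]
  ring_nf

/-- Every coefficient vanishes at the origin, so this is also the derivative there once
`|α| ≥ 2p + 2`. -/
def monomialQuotFDeriv (α : ι → ℕ) (p : ℕ) (x : ι → ℝ) : (ι → ℝ) →L[ℝ] ℝ :=
  ∑ j, (α j * monomialQuot (α - Pi.single j 1) p x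
      - 2 * p * monomialQuot (α + Pi.single j 1) (p + 1) x) •
    (ContinuousLinearMap.proj j : (ι → ℝ) →L[ℝ] ℝ)

lemma hasFDerivAt_monomialQuot_of_ne_zero (α : ι → ℕ) (p : ℕ) {x : ι → ℝ} (hx : x ≠ 0) :
    HasFDerivAt (monomialQuot α p) (monomialQuotFDeriv α p x) x := by
  have hS := (sumSq_pos hx).ne'
  have hinv := (hasDerivAt_inv (pow_ne_zero p hS)).comp_hasFDerivAt x ((hasFDerivAt_sumSq x).pow p)
  have hquot : monomialQuot α p =ᶠ[𝓝 x] fun y => monomialFun α y * (sumSq y ^ p)⁻¹ :=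
    (eventually_ne_nhds hx).mono fun y hy => by rw [monomialQuot, if_neg hy, div_eq_mul_inv]
  refine (((hasFDerivAt_monomialFun α x).mul hinv).congr_of_eventuallyEq hquot).congr_fderiv ?_
  simp only [monomialQuotFDeriv, smul_sum, smul_smul, ← sum_add_distrib, ← add_smul]
  refine sum_congr rfl fun j _ => congrArg (· • _) ?_
  simp only [monomialQuot, if_neg hx, monomialFun_add_single, nsmul_eq_mul, Function.comp_apply]
  cases p
  · simp
  · rw [add_tsub_cancel_right]
    field_simp
    ring

lemma hasFDerivAt_monomialQuot {α : ι → ℕ} {p : ℕ} (h : 2 * p + 2 ≤ ∑ i, α i) (x : ι → ℝ) :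
    HasFDerivAt (monomialQuot α p) (monomialQuotFDeriv α p x) x := by
  rcases eq_or_ne x 0 with rfl | hx
  · simpa [monomialQuotFDeriv] using (monomialQuot_isBigO (α := α) (p := p) (by omega)).hasFDerivAt
      (by omega)
  · exact hasFDerivAt_monomialQuot_of_ne_zero α p hx

lemma sum_le_sum_sub_single_add_one (α : ι → ℕ) (j : ι) :
    ∑ i, α i ≤ ∑ i, (α - Pi.single j 1 : ι → ℕ) i + 1 :=
  calc ∑ i, α i ≤ ∑ i, ((α - Pi.single j 1 : ι → ℕ) i + (Pi.single j 1 : ι → ℕ) i) :=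
        sum_le_sum fun i _ => le_tsub_add
    _ = ∑ i, (α - Pi.single j 1 : ι → ℕ) i + 1 := by simp [sum_add_distrib]

lemma sum_add_single (α : ι → ℕ) (j : ι) :
    ∑ i, (α + Pi.single j 1 : ι → ℕ) i = ∑ i, α i + 1 := by
  simp [sum_add_distrib]

theorem contDiff_monomialQuot (k : ℕ) {α : ι → ℕ} {p : ℕ} (h : 2 * p + k + 1 ≤ ∑ i, α i) :
    ContDiff ℝ k (monomialQuot α p) := by
  induction k generalizing α p with
  | zero => exact contDiff_zero.2 (continuous_monomialQuot (by omega))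
  | succ k ih =>
    refine contDiff_succ_iff_hasFDerivAt.2
      ⟨monomialQuotFDeriv α p, ?_, hasFDerivAt_monomialQuot (by omega)⟩
    refine ContDiff.sum fun j _ => .smul (.sub (.mul contDiff_const (ih ?_))
      (.mul contDiff_const (ih ?_))) contDiff_const
    · have := sum_le_sum_sub_single_add_one α j
      omega
    · rw [sum_add_single]
      omega

end

theorem stmt_0 (k N : ℕ) (hN : 1 ≤ N) :
    ContDiff ℝ k (fun x : Fin N → ℝ =>
      if x = 0 then 0 else (x ⟨0, hN⟩) ^ (3 + k) / (∑ i, (x i) ^ 2)) := by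
  have hdeg : 2 * 1 + k + 1 ≤ ∑ i, (Pi.single (⟨0, hN⟩ : Fin N) (3 + k) : Fin N → ℕ) i := by
    simp only [Fintype.sum_pi_single']
    omega
  convert contDiff_monomialQuot k hdeg using 1
  funext x
  simp [monomialQuot, monomialFun, sumSq, Pi.single_apply, pow_ite]
end

section
/- For any integers k ≥ 0 and N ≥ 1, the function f : ℝ^N → ℝ defined by f(x) = x₁^(3+k)/(x₁² + ... + x_N²) for x ≠ 0 and f(0) = 0 is k-flat at the origin, i.e., all partial derivatives of f of order ≤ k vanish at 0. -/
/-!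
The function is homogeneous of degree `k + 1`: `f (2 • x) = 2 ^ (k + 1) • f x`. Differentiating
`i` times and evaluating at `0` gives `2 ^ i • D^i f 0 = 2 ^ (k + 1) • D^i f 0`, which forces
`D^i f 0 = 0` when `i ≤ k`. No smoothness of `f` is needed: composing with the linear
automorphisms `x ↦ c • x` commutes with `iteratedFDeriv` unconditionally.
-/

section Homogeneous

variable {𝕜 E F : Type*} [NontriviallyNormedField 𝕜] [NormedAddCommGroup E] [NormedSpace 𝕜 E]
  [NormedAddCommGroup F] [NormedSpace 𝕜 F]

theorem iteratedFDeriv_comp_const_smul_of_ne_zero (f : E → F) {c : 𝕜} (hc : c ≠ 0) (i : ℕ)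
    (x : E) :
    iteratedFDeriv 𝕜 i (fun y => f (c • y)) x = c ^ i • iteratedFDeriv 𝕜 i f (c • x) := by
  let e : E ≃L[𝕜] E := ContinuousLinearEquiv.smulLeft (Units.mk0 c hc)
  have h := e.iteratedFDerivWithin_comp_right f uniqueDiffOn_univ (Set.mem_univ (e x)) i
  rw [Set.preimage_univ, iteratedFDerivWithin_univ, iteratedFDerivWithin_univ] at h
  ext m
  simp [show (fun y => f (c • y)) = f ∘ e from rfl, h, e, ContinuousMultilinearMap.map_smul_univ]

theorem iteratedFDeriv_const_smul_of_ne_zero (f : E → F) {b : 𝕜} (hb : b ≠ 0) (i : ℕ) (x : E) :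
    iteratedFDeriv 𝕜 i (fun y => b • f y) x = b • iteratedFDeriv 𝕜 i f x := by
  let e : F ≃L[𝕜] F := ContinuousLinearEquiv.smulLeft (Units.mk0 b hb)
  ext m
  simp [show (fun y => b • f y) = e ∘ f from rfl, e.iteratedFDeriv_comp_left, e]

theorem iteratedFDeriv_zero_eq_zero_of_map_smul {f : E → F} {c b : 𝕜} (hc : c ≠ 0)
    (hf : ∀ x, f (c • x) = b • f x) {i : ℕ} (hi : b ≠ c ^ i) :
    iteratedFDeriv 𝕜 i f 0 = 0 := by
  rcases eq_or_ne b 0 with rfl | hb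
  · have hf0 : f = 0 := funext fun x => by
      simpa [smul_smul, mul_inv_cancel₀ hc] using hf (c⁻¹ • x)
    simp [hf0]
  · have h := iteratedFDeriv_comp_const_smul_of_ne_zero f hc i 0
    rw [funext hf, iteratedFDeriv_const_smul_of_ne_zero f hb, smul_zero] at h
    exact (smul_eq_zero.1 (by rw [sub_smul, h, sub_self])).resolve_left (sub_ne_zero.2 hi)

end Homogeneous

theorem ite_pow_div_sum_sq_smul {ι : Type*} [Fintype ι] (j : ι) (n : ℕ) {c : ℝ} (hc : c ≠ 0)
    (x : ι → ℝ) :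
    (if c • x = 0 then 0 else (c • x) j ^ (n + 2) / ∑ i, (c • x) i ^ 2) =
      c ^ n • (if x = 0 then 0 else x j ^ (n + 2) / ∑ i, x i ^ 2) := by
  simp only [smul_eq_zero, hc, false_or, Pi.smul_apply, smul_eq_mul, mul_pow, ← Finset.mul_sum]
  split_ifs
  · simp
  · rw [mul_div_mul_comm, pow_add, mul_div_cancel_right₀ _ (pow_ne_zero 2 hc)]

theorem stmt_1 (k N : ℕ) (hN : 1 ≤ N) :
    ∀ i ≤ k, iteratedFDeriv ℝ i (fun x : Fin N → ℝ =>
      if x = 0 then 0 else (x ⟨0, hN⟩) ^ (3 + k) / (∑ i, (x i) ^ 2)) 0 = 0 := by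
  intro i hi
  rw [show 3 + k = k + 1 + 2 by ring]
  refine iteratedFDeriv_zero_eq_zero_of_map_smul two_ne_zero
    (ite_pow_div_sum_sq_smul _ (k + 1) two_ne_zero) ?_
  exact (pow_lt_pow_right₀ one_lt_two (by omega : i < k + 1)).ne'
end

section
/- Let A be a commutative ring. The following are equivalent: (1) there exists a ring homomorphism from A to some real closed field (equivalently, to a linearly ordered field); (2) −1 is not a sum of squares in A. Formally: A admits a prime cone if and only if −1 ∉ ΣA². -/
/-- A prime cone of a commutative ring. -/
def IsPrimeCone {A : Type*} [CommRing A] (α : Set A) : Prop :=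
  (∀ a b, a ∈ α → b ∈ α → a + b ∈ α) ∧
  (∀ a b, a ∈ α → b ∈ α → a * b ∈ α) ∧
  (∀ a : A, a ^ 2 ∈ α) ∧
  (-1 : A) ∉ α ∧
  (∀ a b : A, a * b ∈ α → a ∈ α ∨ -b ∈ α)

/-- A precone (preordering without the prime condition). -/
def IsPrecone {A : Type*} [CommRing A] (α : Set A) : Prop :=
  (∀ a b, a ∈ α → b ∈ α → a + b ∈ α) ∧
  (∀ a b, a ∈ α → b ∈ α → a * b ∈ α) ∧
  (∀ a : A, a ^ 2 ∈ α) ∧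
  (-1 : A) ∉ α

theorem isSumSq_sq_mul {A : Type*} [CommRing A] (a : A) {y : A} (hy : IsSumSq y) :
    IsSumSq (a * a * y) := by
  induction hy with
  | zero => simpa using IsSumSq.zero
  | sq_add b pT ih =>
    rw [mul_add]
    refine IsSumSq.add ?_ ih
    have : a * a * (b * b) = (a * b) * (a * b) + 0 := by ring
    rw [this]
    exact IsSumSq.sq_add _ IsSumSq.zero

theorem isSumSq_mul {A : Type*} [CommRing A] {x y : A} (hx : IsSumSq x) (hy : IsSumSq y) :
    IsSumSq (x * y) := by
  induction hx with
  | zero => simpa using IsSumSq.zero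
  | sq_add a pS ih =>
    rw [add_mul]
    exact IsSumSq.add (isSumSq_sq_mul a hy) ih

theorem precone_sumsq {A : Type*} [CommRing A] (h : ¬ IsSumSq (-1 : A)) :
    IsPrecone {x : A | IsSumSq x} := by
  refine ⟨fun a b ha hb => ha.add hb, fun a b ha hb => isSumSq_mul ha hb, fun a => ?_, h⟩
  have : a ^ 2 = a * a + 0 := by ring
  exact this ▸ IsSumSq.sq_add a IsSumSq.zero

theorem stmt_4 {A : Type*} [CommRing A] :
    (∃ α : Set A, IsPrimeCone α) ↔ ¬ IsSumSq (-1 : A) := by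
  constructor
  · rintro ⟨α, hadd, hmul, hsq, hneg, hprime⟩ hss
    apply hneg
    have key : ∀ x : A, IsSumSq x → x ∈ α := by
      intro x hx
      induction hx with
      | zero => simpa using hsq 0
      | sq_add a pS ih =>
        exact hadd _ _ (by simpa [sq] using hsq a) ih
    exact key _ hss
  · intro h
    -- Zorn's lemma: get a maximal precone containing ΣA².
    obtain ⟨P, hPs, hPmax⟩ := zorn_subset_nonempty {α : Set A | IsPrecone α}
      (fun c hcS hchain hcne => by
        refine ⟨⋃₀ c, ⟨?_, ?_, ?_, ?_⟩, fun s hs => Set.subset_sUnion_of_mem hs⟩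
        · rintro a b ⟨s, hs, has⟩ ⟨t, ht, hbt⟩
          rcases hchain.total hs ht with hst | hts
          · exact ⟨t, ht, (hcS ht).1 a b (hst has) hbt⟩
          · exact ⟨s, hs, (hcS hs).1 a b has (hts hbt)⟩
        · rintro a b ⟨s, hs, has⟩ ⟨t, ht, hbt⟩
          rcases hchain.total hs ht with hst | hts
          · exact ⟨t, ht, (hcS ht).2.1 a b (hst has) hbt⟩
          · exact ⟨s, hs, (hcS hs).2.1 a b has (hts hbt)⟩
        · intro a
          obtain ⟨s, hs⟩ := hcne
          exact ⟨s, hs, (hcS hs).2.2.1 a⟩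
        · rintro ⟨s, hs, hneg⟩
          exact (hcS hs).2.2.2 hneg)
      {x : A | IsSumSq x} (precone_sumsq h)
    obtain ⟨Padd, Pmul, Psq, Pneg⟩ := hPmax.prop
    have h0 : (0 : A) ∈ P := by simpa using Psq 0
    have h1 : (1 : A) ∈ P := by simpa using Psq 1
    -- key lemma: if a ∉ P then -1 ∈ P + a•P
    have key : ∀ a : A, a ∉ P → ∃ p ∈ P, ∃ q ∈ P, (-1 : A) = p + a * q := by
      intro a ha
      by_contra hcon
      push_neg at hcon
      set P' : Set A := {x | ∃ p ∈ P, ∃ q ∈ P, x = p + a * q} with hP'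
      have hPP' : P ⊆ P' := fun p hp => ⟨p, hp, 0, h0, by ring⟩
      have haP' : a ∈ P' := ⟨0, h0, 1, h1, by ring⟩
      have hP'pre : IsPrecone P' := by
        refine ⟨?_, ?_, fun x => hPP' (Psq x), ?_⟩
        · rintro x y ⟨p1, hp1, q1, hq1, rfl⟩ ⟨p2, hp2, q2, hq2, rfl⟩
          exact ⟨p1 + p2, Padd _ _ hp1 hp2, q1 + q2, Padd _ _ hq1 hq2, by ring⟩
        · rintro x y ⟨p1, hp1, q1, hq1, rfl⟩ ⟨p2, hp2, q2, hq2, rfl⟩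
          refine ⟨p1 * p2 + a ^ 2 * (q1 * q2),
            Padd _ _ (Pmul _ _ hp1 hp2) (Pmul _ _ (Psq a) (Pmul _ _ hq1 hq2)),
            p1 * q2 + q1 * p2, Padd _ _ (Pmul _ _ hp1 hq2) (Pmul _ _ hq1 hp2), by ring⟩
        · rintro ⟨p, hp, q, hq, hpq⟩
          exact hcon p hp q hq hpq
      have := hPmax.eq_of_subset hP'pre hPP'
      exact ha (this ▸ haP')
    -- totality
    have total : ∀ a : A, a ∈ P ∨ -a ∈ P := by
      intro a
      by_contra hcon
      push_neg at hcon
      obtain ⟨p1, hp1, q1, hq1, he1⟩ := key a hcon.1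
      obtain ⟨p2, hp2, q2, hq2, he2⟩ := key (-a) hcon.2
      apply Pneg
      have : (-1 : A) = p1 + p2 + p1 * p2 + a ^ 2 * (q1 * q2) := by
        linear_combination (1 + p2) * he1 - a * q1 * he2
      rw [this]
      exact Padd _ _ (Padd _ _ (Padd _ _ hp1 hp2) (Pmul _ _ hp1 hp2))
        (Pmul _ _ (Psq a) (Pmul _ _ hq1 hq2))
    refine ⟨P, Padd, Pmul, Psq, Pneg, ?_⟩
    intro a b hab
    by_contra hcon
    push_neg at hcon
    obtain ⟨ha, hb⟩ := hcon
    obtain ⟨p, hp, q, hq, he⟩ := key a ha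
    -- -b*(1+p) = a*b*q ∈ P
    have hmem : -b * (1 + p) ∈ P := by
      have : -b * (1 + p) = a * b * q := by linear_combination b * he
      rw [this]
      exact Pmul _ _ hab hq
    rcases total b with hbP | hnbP
    · apply hb
      have : -b = -b * (1 + p) + b * p := by ring
      rw [this]
      exact Padd _ _ hmem (Pmul _ _ hbP hp)
    · exact hb hnbP
end

section
/- Let A be a commutative ring in which −1 is not a sum of squares. Then A has a real prime ideal, i.e., a prime ideal p such that whenever a₁² + ... + a_n² ∈ p, all aᵢ ∈ p. -/
/-!
Zorn's lemma gives a maximal preordering `P` containing the sums of squares. By maximality, for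
`a ∉ P` the preordering `P + aP` cannot be formed, i.e. `-1 = p + a q` with `p, q ∈ P`; two such
relations for `a` and `b` show that `-ab ∈ P` forces `a ∈ P` or `b ∈ P`, so `P` is an ordering.
Its support `P ∩ -P` is then a prime ideal, and it is real because `P` contains every square.
-/

def Ideal.IsReal {A : Type*} [CommRing A] (p : Ideal A) : Prop :=
  ∀ (n : ℕ) (a : Fin n → A), (∑ i, (a i) ^ 2) ∈ p → ∀ i, a i ∈ p

namespace RingPreordering

variable {R : Type*} [CommRing R]

def sumSq (h : ¬ IsSumSq (-1 : R)) : RingPreordering R where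
  __ := Subsemiring.sumSq R
  mem_of_isSquare' hx := (Subsemiring.mem_sumSq).2 hx.isSumSq
  neg_one_notMem' := by simpa using h

theorem exists_mem_and_mem_of_mem_biUnion {c : Set (RingPreordering R)}
    (hc : IsChain (· ≤ ·) c) {x y : R} (hx : x ∈ ⋃ P ∈ c, (P : Set R))
    (hy : y ∈ ⋃ P ∈ c, (P : Set R)) : ∃ S ∈ c, x ∈ S ∧ y ∈ S := by
  simp only [Set.mem_iUnion₂, SetLike.mem_coe] at hx hy
  obtain ⟨P, hP, hxP⟩ := hx
  obtain ⟨Q, hQ, hyQ⟩ := hy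
  obtain ⟨S, hS, hPS, hQS⟩ := hc.directedOn P hP Q hQ
  exact ⟨S, hS, hPS hxP, hQS hyQ⟩

def chainSup (c : Set (RingPreordering R)) (hc : IsChain (· ≤ ·) c) (hne : c.Nonempty) :
    RingPreordering R :=
  mk' (⋃ P ∈ c, (P : Set R))
    (fun hx hy =>
      let ⟨_, hS, hxS, hyS⟩ := exists_mem_and_mem_of_mem_biUnion hc hx hy
      Set.mem_biUnion hS (add_mem hxS hyS))
    (fun hx hy =>
      let ⟨_, hS, hxS, hyS⟩ := exists_mem_and_mem_of_mem_biUnion hc hx hy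
      Set.mem_biUnion hS (mul_mem hxS hyS))
    (fun x => Set.mem_biUnion hne.some_mem (hne.some.mul_self_mem x))
    (by
      simp only [Set.mem_iUnion₂, SetLike.mem_coe, not_exists]
      exact fun P _ => P.neg_one_notMem)

theorem le_chainSup {c : Set (RingPreordering R)} (hc : IsChain (· ≤ ·) c) (hne : c.Nonempty)
    {P : RingPreordering R} (hP : P ∈ c) : P ≤ chainSup c hc hne :=
  fun _ hx => Set.mem_biUnion hP hx

theorem exists_isMax (h : ¬ IsSumSq (-1 : R)) : ∃ P : RingPreordering R, IsMax P :=
  haveI : Nonempty (RingPreordering R) := ⟨sumSq h⟩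
  zorn_le_nonempty fun c hc hne => ⟨chainSup c hc hne, fun _ hP => le_chainSup hc hne hP⟩

def adjoin (P : RingPreordering R) (a : R) (h : ∀ p ∈ P, ∀ q ∈ P, p + a * q ≠ -1) :
    RingPreordering R :=
  mk' {x | ∃ p ∈ P, ∃ q ∈ P, p + a * q = x}
    (by
      rintro _ _ ⟨p, hp, q, hq, rfl⟩ ⟨p', hp', q', hq', rfl⟩
      exact ⟨p + p', add_mem hp hp', q + q', add_mem hq hq', by ring⟩)
    (by
      rintro _ _ ⟨p, hp, q, hq, rfl⟩ ⟨p', hp', q', hq', rfl⟩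
      refine ⟨p * p' + a ^ 2 * (q * q'), ?_, p * q' + q * p', ?_, by ring⟩
      · exact add_mem (mul_mem hp hp') (mul_mem (P.pow_two_mem a) (mul_mem hq hq'))
      · exact add_mem (mul_mem hp hq') (mul_mem hq hp'))
    (fun x => ⟨x * x, P.mul_self_mem x, 0, zero_mem P, by ring⟩)
    (fun ⟨p, hp, q, hq, he⟩ => h p hp q hq he)

variable {P : RingPreordering R}

theorem le_adjoin (a : R) (h : ∀ p ∈ P, ∀ q ∈ P, p + a * q ≠ -1) : P ≤ adjoin P a h :=
  fun x hx => ⟨x, hx, 0, zero_mem P, by ring⟩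

theorem mem_adjoin_self (a : R) (h : ∀ p ∈ P, ∀ q ∈ P, p + a * q ≠ -1) : a ∈ adjoin P a h :=
  ⟨0, zero_mem P, 1, one_mem P, by ring⟩

theorem exists_add_mul_eq_neg_one_of_isMax (hP : IsMax P) {a : R} (ha : a ∉ P) :
    ∃ p ∈ P, ∃ q ∈ P, p + a * q = -1 := by
  by_contra! h
  exact ha (hP (le_adjoin a h) (mem_adjoin_self a h))

theorem isOrdering_of_isMax (hP : IsMax P) : P.IsOrdering := by
  refine isOrdering_iff.2 fun a b hab => ?_
  by_contra! hnot
  obtain ⟨p₁, hp₁, q₁, hq₁, he₁⟩ := exists_add_mul_eq_neg_one_of_isMax hP hnot.1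
  obtain ⟨p₂, hp₂, q₂, hq₂, he₂⟩ := exists_add_mul_eq_neg_one_of_isMax hP hnot.2
  -- `(a q₁)(b q₂) = (1 + p₁)(1 + p₂)` expresses `-1` through elements of `P`
  have key : -1 = -(a * b) * (q₁ * q₂) + (p₁ + p₂ + p₁ * p₂) := by
    linear_combination a * q₁ * he₂ - (1 + p₂) * he₁
  refine P.neg_one_notMem (key ▸ add_mem (mul_mem hab (mul_mem hq₁ hq₂)) ?_)
  exact add_mem (add_mem hp₁ hp₂) (mul_mem hp₁ hp₂)

theorem neg_mem_of_neg_sum_mem {ι : Type*} {s : Finset ι} {f : ι → R}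
    (hf : ∀ i ∈ s, f i ∈ P) (hs : -(∑ i ∈ s, f i) ∈ P) {i : ι} (hi : i ∈ s) : -f i ∈ P := by
  classical
  have : -f i = -(∑ j ∈ s, f j) + ∑ j ∈ s.erase i, f j := by
    rw [← Finset.add_sum_erase s f hi]; ring
  exact this ▸ add_mem hs (sum_mem fun j hj => hf j (Finset.mem_of_mem_erase hj))

theorem isReal_support [P.HasIdealSupport] [P.support.IsPrime] : P.support.IsReal := by
  intro n a hsum i
  have hsq : a i ^ 2 ∈ P.support :=
    mem_support.2 ⟨P.pow_two_mem _,
      neg_mem_of_neg_sum_mem (fun j _ => P.pow_two_mem (a j)) (mem_support.1 hsum).2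
        (Finset.mem_univ i)⟩
  exact Ideal.IsPrime.mem_of_pow_mem inferInstance 2 hsq

end RingPreordering

theorem stmt_7 {A : Type*} [CommRing A] (h : ¬ IsSumSq (-1 : A)) :
    ∃ p : Ideal A, p.IsPrime ∧
      ∀ (n : ℕ) (a : Fin n → A), (∑ i, (a i) ^ 2) ∈ p → ∀ i, a i ∈ p := by
  obtain ⟨P, hP⟩ := RingPreordering.exists_isMax h
  have : P.IsOrdering := RingPreordering.isOrdering_of_isMax hP
  exact ⟨P.support, inferInstance, RingPreordering.isReal_support⟩
end
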